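/- Model contraction preserves assertibility and validity: for a prevalent strict finitistic model W and a closed formula A, the two-node contraction W|A (with root r and leaf k, where atoms occurring in A or equal to E hold at k iff they hold somewhere in W, and hold at r iff they hold at W's root) satisfies: for every subformula A' of A, A' is assertible in W iff k forces A' in W|A, and A' is valid in W iff r forces A' in W|A. -/
import Mathlib


/-- Formulas of the (domain-extended) language of strict finitistic first-order
logic: atoms `atom P ds` (predicate symbol `P` applied to domain elements),
the existence predicate `E`, the connectives, global negation `neg`, and the
two modes (global / local) of universal and existential quantification. -/
inductive Fm (D : Type) : Type
  | top
  | bot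
  | atom (P : ℕ) (ds : List D)
  | E (d : D)
  | conj (A B : Fm D)
  | disj (A B : Fm D)
  | impl (A B : Fm D)
  | neg (A : Fm D)
  | allG (A : D → Fm D)
  | allL (A : D → Fm D)
  | exG (A : D → Fm D)
  | exL (A : D → Fm D)

/-- Weak negation `⌐A := A → ⊥`. -/
def Fm.wneg {D : Type} (A : Fm D) : Fm D := Fm.impl A Fm.bot

/-- A strict finitistic model: a rooted partially ordered Kripke frame with a
constant domain `D` and a monotone valuation of atoms (including the
existence predicate `E`). -/
structure SFModel (D : Type) : Type 1 where
  K : Type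
  le : K → K → Prop
  refl : ∀ k, le k k
  trans : ∀ {a b c}, le a b → le b c → le a c
  antisymm : ∀ {a b}, le a b → le b a → a = b
  root : K
  root_le : ∀ k, le root k
  atomVal : ℕ → List D → K → Prop
  EVal : D → K → Prop
  atom_mono : ∀ {P ds k k'}, le k k' → atomVal P ds k → atomVal P ds k'
  E_mono : ∀ {d k k'}, le k k' → EVal d k → EVal d k'

/-- The strict finitistic forcing relation `k ⊨ A`. -/
def SFModel.force {D : Type} (W : SFModel D) : W.K → Fm D → Prop
  | _, Fm.top => True
  | _, Fm.bot => False
  | k, Fm.atom P ds => W.atomVal P ds k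
  | k, Fm.E d => W.EVal d k
  | k, Fm.conj A B => W.force k A ∧ W.force k B
  | k, Fm.disj A B => W.force k A ∨ W.force k B
  | k, Fm.impl A B => ∀ k', W.le k k' → W.force k' A → ∃ k'', W.le k' k'' ∧ W.force k'' B
  | _, Fm.neg A => ∀ l, ¬ W.force l A
  | k, Fm.allG A => ∀ (d : D) (k' : W.K), W.le k k' → ∃ k'', W.le k' k'' ∧ W.force k'' (A d)
  | k, Fm.allL A => ∀ (d : D) (k' : W.K), W.le k k' → W.EVal d k' →
      ∃ k'', W.le k' k'' ∧ W.force k'' (A d)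
  | k, Fm.exG A => ∃ d : D, W.force k (A d)
  | k, Fm.exL A => ∃ d : D, W.EVal d k ∧ W.force k (A d)

/-- `A` is valid in `W`: forced at every node. -/
def SFModel.valid {D : Type} (W : SFModel D) (A : Fm D) : Prop := ∀ k, W.force k A

/-- `A` is assertible in `W`: forced at some node. -/
def SFModel.assertible {D : Type} (W : SFModel D) (A : Fm D) : Prop := ∃ k, W.force k A

/-- `A` is prevalent in `W`: above every node it is eventually forced. -/
def SFModel.prevalent {D : Type} (W : SFModel D) (A : Fm D) : Prop :=
  ∀ k, ∃ k', W.le k k' ∧ W.force k' A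

/-- Atomic prevalence property: every assertible closed atom (including `E`)
is prevalent. -/
def SFModel.atomicPrev {D : Type} (W : SFModel D) : Prop :=
  (∀ (P : ℕ) (ds : List D), W.assertible (Fm.atom P ds) → W.prevalent (Fm.atom P ds)) ∧
  (∀ d : D, W.assertible (Fm.E d) → W.prevalent (Fm.E d))

/-- Formula prevalence property: every assertible closed formula is prevalent. -/
def SFModel.formulaPrev {D : Type} (W : SFModel D) : Prop :=
  ∀ A : Fm D, W.assertible A → W.prevalent A

/-- Object prevalence property: `E(d)` is prevalent for every domain element. -/
def SFModel.objectPrev {D : Type} (W : SFModel D) : Prop :=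
  ∀ d : D, W.prevalent (Fm.E d)

/-- A prevalent model: both the formula and object prevalence properties. -/
def SFModel.prevModel {D : Type} (W : SFModel D) : Prop :=
  W.formulaPrev ∧ W.objectPrev

/-- Predicate symbol `P` occurs in the formula `A`. -/
def Fm.occursP {D : Type} (P : ℕ) : Fm D → Prop
  | Fm.top => False
  | Fm.bot => False
  | Fm.atom Q _ => Q = P
  | Fm.E _ => False
  | Fm.conj A B => A.occursP P ∨ B.occursP P
  | Fm.disj A B => A.occursP P ∨ B.occursP P
  | Fm.impl A B => A.occursP P ∨ B.occursP P
  | Fm.neg A => A.occursP P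
  | Fm.allG A => ∃ d, (A d).occursP P
  | Fm.allL A => ∃ d, (A d).occursP P
  | Fm.exG A => ∃ d, (A d).occursP P
  | Fm.exL A => ∃ d, (A d).occursP P

/-- Subformula relation. -/
inductive Subfm {D : Type} : Fm D → Fm D → Prop
  | refl (A : Fm D) : Subfm A A
  | conjL {A B C : Fm D} : Subfm A B → Subfm A (Fm.conj B C)
  | conjR {A B C : Fm D} : Subfm A C → Subfm A (Fm.conj B C)
  | disjL {A B C : Fm D} : Subfm A B → Subfm A (Fm.disj B C)
  | disjR {A B C : Fm D} : Subfm A C → Subfm A (Fm.disj B C)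
  | implL {A B C : Fm D} : Subfm A B → Subfm A (Fm.impl B C)
  | implR {A B C : Fm D} : Subfm A C → Subfm A (Fm.impl B C)
  | neg {A B : Fm D} : Subfm A B → Subfm A (Fm.neg B)
  | allG {A : Fm D} {B : D → Fm D} {d : D} : Subfm A (B d) → Subfm A (Fm.allG B)
  | allL {A : Fm D} {B : D → Fm D} {d : D} : Subfm A (B d) → Subfm A (Fm.allL B)
  | exG {A : Fm D} {B : D → Fm D} {d : D} : Subfm A (B d) → Subfm A (Fm.exG B)
  | exL {A : Fm D} {B : D → Fm D} {d : D} : Subfm A (B d) → Subfm A (Fm.exL B)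

/-- The two-node contraction model `W|A`: root `false` and leaf `true`; a
predicate occurring in `A` (and the existence predicate `E`) holds at the
leaf iff it holds somewhere in `W`, and at the root iff it holds at `W`'s
root; all other predicates get empty extensions. -/
def SFModel.contraction {D : Type} (W : SFModel D) (A : Fm D) : SFModel D where
  K := Bool
  le := (· ≤ ·)
  refl := fun k => le_refl k
  trans := fun h h' => le_trans h h'
  antisymm := fun h h' => le_antisymm h h'
  root := false
  root_le := fun k => Bool.false_le k
  atomVal := fun P ds k =>
    A.occursP P ∧ (if k = true then ∃ l, W.atomVal P ds l else W.atomVal P ds W.root)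
  EVal := fun d k => if k = true then ∃ l, W.EVal d l else W.EVal d W.root
  atom_mono := by
    intro P ds k k' hle h
    refine ⟨h.1, ?_⟩
    cases k <;> cases k' <;> simp_all
    · exact ⟨W.root, h.2⟩
    · exact absurd hle (by decide)
  E_mono := by
    intro d k k' hle h
    cases k <;> cases k' <;> simp_all
    · exact ⟨W.root, h⟩
    · exact absurd hle (by decide)

/-- Forcing is monotone along the accessibility relation. -/
lemma SFModel.force_mono {D : Type} (W : SFModel D) : ∀ (B : Fm D) {k k' : W.K},
    W.le k k' → W.force k B → W.force k' B := by
  intro B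
  induction B with
  | top => intro k k' _ _; trivial
  | bot => intro k k' _ hf; exact hf
  | atom P ds => intro k k' h hf; exact W.atom_mono h hf
  | E d => intro k k' h hf; exact W.E_mono h hf
  | conj B C ihB ihC => intro k k' h hf; exact ⟨ihB h hf.1, ihC h hf.2⟩
  | disj B C ihB ihC => intro k k' h hf; exact hf.imp (ihB h) (ihC h)
  | impl B C ihB ihC => intro k k' h hf l hl ha; exact hf l (W.trans h hl) ha
  | neg B ih => intro k k' _ hf; exact hf
  | allG B ih => intro k k' h hf d l hl; exact hf d l (W.trans h hl)
  | allL B ih => intro k k' h hf d l hl he; exact hf d l (W.trans h hl) he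
  | exG B ih =>
      intro k k' h hf; obtain ⟨d, hd⟩ := hf; exact ⟨d, ih d h hd⟩
  | exL B ih =>
      intro k k' h hf; obtain ⟨d, he, hd⟩ := hf; exact ⟨d, W.E_mono h he, ih d h hd⟩

/-- Validity is equivalent to being forced at the root. -/
lemma SFModel.valid_iff_root {D : Type} (W : SFModel D) (B : Fm D) :
    W.valid B ↔ W.force W.root B :=
  ⟨fun h => h _, fun h k => W.force_mono B (W.root_le k) h⟩

/-- Transitivity of the subformula relation. -/
lemma Subfm.trans {D : Type} {X Y Z : Fm D} (h1 : Subfm X Y) (h2 : Subfm Y Z) :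
    Subfm X Z := by
  induction h2 with
  | refl => exact h1
  | conjL _ ih => exact Subfm.conjL ih
  | conjR _ ih => exact Subfm.conjR ih
  | disjL _ ih => exact Subfm.disjL ih
  | disjR _ ih => exact Subfm.disjR ih
  | implL _ ih => exact Subfm.implL ih
  | implR _ ih => exact Subfm.implR ih
  | neg _ ih => exact Subfm.neg ih
  | allG _ ih => exact Subfm.allG ih
  | allL _ ih => exact Subfm.allL ih
  | exG _ ih => exact Subfm.exG ih
  | exL _ ih => exact Subfm.exL ih

/-- Occurrence of a predicate symbol is preserved upward along subformulas. -/
lemma occursP_of_subfm {D : Type} {B A : Fm D} {P : ℕ} (h : Subfm B A)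
    (ho : B.occursP P) : A.occursP P := by
  induction h with
  | refl => exact ho
  | conjL _ ih => exact Or.inl ih
  | conjR _ ih => exact Or.inr ih
  | disjL _ ih => exact Or.inl ih
  | disjR _ ih => exact Or.inr ih
  | implL _ ih => exact Or.inl ih
  | implR _ ih => exact Or.inr ih
  | neg _ ih => exact ih
  | allG _ ih => exact ⟨_, ih⟩
  | allL _ ih => exact ⟨_, ih⟩
  | exG _ ih => exact ⟨_, ih⟩
  | exL _ ih => exact ⟨_, ih⟩

lemma Bool.eq_true_of_true_le' : ∀ {b : Bool}, true ≤ b → b = true := by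
  intro b h; cases b
  · exact absurd h (by decide)
  · rfl

lemma contr_impl_true {D : Type} (W : SFModel D) (A B C : Fm D) :
    (W.contraction A).force true (Fm.impl B C) ↔
      ((W.contraction A).force true B → (W.contraction A).force true C) := by
  constructor
  · intro h hB
    obtain ⟨k'', hle, hC⟩ := h true (le_refl _) hB
    have hk := Bool.eq_true_of_true_le' hle
    subst hk; exact hC
  · intro h k' hle hB
    have hk := Bool.eq_true_of_true_le' hle
    subst hk
    exact ⟨true, le_refl _, h hB⟩

lemma contr_impl_false {D : Type} (W : SFModel D) (A B C : Fm D) :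
    (W.contraction A).force false (Fm.impl B C) ↔
      ((W.contraction A).force true B → (W.contraction A).force true C) := by
  constructor
  · intro h hB
    obtain ⟨k'', hle, hC⟩ := h true (Bool.false_le true) hB
    have hk := Bool.eq_true_of_true_le' hle
    subst hk; exact hC
  · intro h k' hle hB
    exact ⟨true, Bool.le_true k', h ((W.contraction A).force_mono B (Bool.le_true k') hB)⟩

lemma contr_neg {D : Type} (W : SFModel D) (A B : Fm D) (k : Bool) :
    (W.contraction A).force k (Fm.neg B) ↔ ¬ (W.contraction A).force true B := by
  constructor
  · intro h; exact h true
  · intro h l hl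
    exact h ((W.contraction A).force_mono B (Bool.le_true l) hl)

lemma contr_allG {D : Type} (W : SFModel D) (A : Fm D) (B : D → Fm D) (k : Bool) :
    (W.contraction A).force k (Fm.allG B) ↔
      ∀ d, (W.contraction A).force true (B d) := by
  constructor
  · intro h d
    obtain ⟨k'', hle, hf⟩ := h d true (Bool.le_true k)
    have hk := Bool.eq_true_of_true_le' hle
    subst hk; exact hf
  · intro h d k' hle
    exact ⟨true, Bool.le_true k', h d⟩

lemma contr_allL {D : Type} (W : SFModel D) (A : Fm D) (B : D → Fm D) (k : Bool)
    (hE : ∀ d, ∃ l, W.EVal d l) :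
    (W.contraction A).force k (Fm.allL B) ↔
      ∀ d, (W.contraction A).force true (B d) := by
  constructor
  · intro h d
    obtain ⟨k'', hle, hf⟩ := h d true (Bool.le_true k) (by simp [SFModel.contraction]; exact hE d)
    have hk := Bool.eq_true_of_true_le' hle
    subst hk; exact hf
  · intro h d k' hle he
    exact ⟨true, Bool.le_true k', h d⟩

lemma contr_exL_true {D : Type} (W : SFModel D) (A : Fm D) (B : D → Fm D)
    (hE : ∀ d, ∃ l, W.EVal d l) :
    (W.contraction A).force true (Fm.exL B) ↔
      ∃ d, (W.contraction A).force true (B d) := by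
  constructor
  · rintro ⟨d, _, hf⟩; exact ⟨d, hf⟩
  · rintro ⟨d, hf⟩
    exact ⟨d, by simp [SFModel.contraction]; exact hE d, hf⟩

/-- Model contraction preserves assertibility and validity:
for a prevalent strict finitistic model `W` and a closed formula `A`, every
subformula `A'` of `A` is assertible in `W` iff the leaf of `W|A` forces
`A'`, and valid in `W` iff the root of `W|A` forces `A'`. -/
theorem contraction_preserves {D : Type} [Nonempty D] (W : SFModel D)
    (hW : W.prevModel) (A : Fm D) :
    ∀ A' : Fm D, Subfm A' A →
      (W.assertible A' ↔ (W.contraction A).force true A') ∧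
      (W.valid A' ↔ (W.contraction A).force false A') := by
  obtain ⟨hFP, hOP⟩ := hW
  have hEat : ∀ d : D, ∃ l, W.EVal d l := by
    intro d
    obtain ⟨k', _, hk'⟩ := hOP d W.root
    exact ⟨k', hk'⟩
  intro A'
  induction A' with
  | top =>
      intro _
      exact ⟨⟨fun _ => trivial, fun _ => ⟨W.root, trivial⟩⟩,
        ⟨fun _ => trivial, fun _ k => trivial⟩⟩
  | bot =>
      intro _
      refine ⟨⟨?_, ?_⟩, ⟨?_, ?_⟩⟩
      · rintro ⟨k, h⟩; exact h
      · intro h; exact h.elim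
      · intro h; exact h W.root
      · intro h; exact h.elim
  | atom P ds =>
      intro hsub
      have hocc : A.occursP P := occursP_of_subfm hsub rfl
      constructor
      · constructor
        · rintro ⟨l, hl⟩
          exact ⟨hocc, ⟨l, hl⟩⟩
        · rintro ⟨-, l, hl⟩
          exact ⟨l, hl⟩
      · rw [W.valid_iff_root]
        exact ⟨fun h => ⟨hocc, h⟩, fun h => h.2⟩
  | E d =>
      intro _
      constructor
      · exact ⟨fun ⟨k, h⟩ => ⟨k, h⟩, fun ⟨l, h⟩ => ⟨l, h⟩⟩
      · rw [W.valid_iff_root]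
        exact Iff.rfl
  | conj B C ihB ihC =>
      intro hsub
      obtain ⟨iB1, iB2⟩ := ihB (Subfm.trans (Subfm.conjL (Subfm.refl B)) hsub)
      obtain ⟨iC1, iC2⟩ := ihC (Subfm.trans (Subfm.conjR (Subfm.refl C)) hsub)
      constructor
      · constructor
        · rintro ⟨k, hB, hCf⟩
          exact ⟨iB1.mp ⟨k, hB⟩, iC1.mp ⟨k, hCf⟩⟩
        · rintro ⟨hB, hCf⟩
          obtain ⟨k, hCk⟩ := iC1.mpr hCf
          obtain ⟨k', hle, hBk⟩ := hFP B (iB1.mpr hB) k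
          exact ⟨k', hBk, W.force_mono C hle hCk⟩
      · constructor
        · intro h
          exact ⟨iB2.mp fun k => (h k).1, iC2.mp fun k => (h k).2⟩
        · rintro ⟨hB, hCf⟩ k
          exact ⟨iB2.mpr hB k, iC2.mpr hCf k⟩
  | disj B C ihB ihC =>
      intro hsub
      obtain ⟨iB1, iB2⟩ := ihB (Subfm.trans (Subfm.disjL (Subfm.refl B)) hsub)
      obtain ⟨iC1, iC2⟩ := ihC (Subfm.trans (Subfm.disjR (Subfm.refl C)) hsub)
      constructor
      · constructor
        · rintro ⟨k, h | h⟩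
          · exact Or.inl (iB1.mp ⟨k, h⟩)
          · exact Or.inr (iC1.mp ⟨k, h⟩)
        · rintro (h | h)
          · obtain ⟨k, hk⟩ := iB1.mpr h; exact ⟨k, Or.inl hk⟩
          · obtain ⟨k, hk⟩ := iC1.mpr h; exact ⟨k, Or.inr hk⟩
      · rw [W.valid_iff_root]
        constructor
        · rintro (h | h)
          · exact Or.inl (iB2.mp ((W.valid_iff_root B).mpr h))
          · exact Or.inr (iC2.mp ((W.valid_iff_root C).mpr h))
        · rintro (h | h)
          · exact Or.inl ((W.valid_iff_root B).mp (iB2.mpr h))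
          · exact Or.inr ((W.valid_iff_root C).mp (iC2.mpr h))
  | impl B C ihB ihC =>
      intro hsub
      obtain ⟨iB1, iB2⟩ := ihB (Subfm.trans (Subfm.implL (Subfm.refl B)) hsub)
      obtain ⟨iC1, iC2⟩ := ihC (Subfm.trans (Subfm.implR (Subfm.refl C)) hsub)
      have key1 : W.assertible (Fm.impl B C) → (W.assertible B → W.assertible C) := by
        rintro ⟨k, h⟩ hAB
        obtain ⟨k', hle, hB⟩ := hFP B hAB k
        obtain ⟨k'', _, hCk⟩ := h k' hle hB
        exact ⟨k'', hCk⟩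
      have key2 : (W.assertible B → W.assertible C) → W.valid (Fm.impl B C) := by
        intro h k k' hle hB
        obtain ⟨k'', hle', hCk⟩ := hFP C (h ⟨k', hB⟩) k'
        exact ⟨k'', hle', hCk⟩
      constructor
      · rw [contr_impl_true]
        constructor
        · intro h hB; exact iC1.mp (key1 h (iB1.mpr hB))
        · intro h; exact ⟨W.root, key2 (fun hB => iC1.mpr (h (iB1.mp hB))) W.root⟩
      · rw [contr_impl_false]
        constructor
        · intro h hB
          exact iC1.mp (key1 ⟨W.root, h W.root⟩ (iB1.mpr hB))
        · intro h; exact key2 (fun hB => iC1.mpr (h (iB1.mp hB)))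
  | neg B ihB =>
      intro hsub
      obtain ⟨iB1, iB2⟩ := ihB (Subfm.trans (Subfm.neg (Subfm.refl B)) hsub)
      have hNA : ∀ k, W.force k (Fm.neg B) ↔ ¬ W.assertible B := by
        intro k
        exact ⟨fun h ⟨l, hl⟩ => h l hl, fun h l hl => h ⟨l, hl⟩⟩
      constructor
      · rw [contr_neg]
        constructor
        · rintro ⟨k, hk⟩ hB; exact (hNA k).mp hk (iB1.mpr hB)
        · intro h; exact ⟨W.root, (hNA W.root).mpr (fun hA => h (iB1.mp hA))⟩
      · rw [contr_neg]
        constructor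
        · intro h hB; exact (hNA W.root).mp (h W.root) (iB1.mpr hB)
        · intro h k; exact (hNA k).mpr (fun hA => h (iB1.mp hA))
  | allG B ihB =>
      intro hsub
      have ih := fun d => ihB d (Subfm.trans (Subfm.allG (Subfm.refl (B d))) hsub)
      have key1 : W.assertible (Fm.allG B) → ∀ d, W.assertible (B d) := by
        rintro ⟨k, h⟩ d
        obtain ⟨k'', _, hf⟩ := h d k (W.refl k)
        exact ⟨k'', hf⟩
      have key2 : (∀ d, W.assertible (B d)) → W.valid (Fm.allG B) := by
        intro h k d k' hle
        exact hFP (B d) (h d) k'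
      constructor
      · rw [contr_allG]
        constructor
        · intro h d; exact (ih d).1.mp (key1 h d)
        · intro h; exact ⟨W.root, key2 (fun d => (ih d).1.mpr (h d)) W.root⟩
      · rw [contr_allG]
        constructor
        · intro h d; exact (ih d).1.mp (key1 ⟨W.root, h W.root⟩ d)
        · intro h; exact key2 fun d => (ih d).1.mpr (h d)
  | allL B ihB =>
      intro hsub
      have ih := fun d => ihB d (Subfm.trans (Subfm.allL (Subfm.refl (B d))) hsub)
      have key1 : W.assertible (Fm.allL B) → ∀ d, W.assertible (B d) := by
        rintro ⟨k, h⟩ d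
        obtain ⟨k', hle, hE⟩ := hOP d k
        obtain ⟨k'', _, hf⟩ := h d k' hle hE
        exact ⟨k'', hf⟩
      have key2 : (∀ d, W.assertible (B d)) → W.valid (Fm.allL B) := by
        intro h k d k' hle hE
        exact hFP (B d) (h d) k'
      constructor
      · rw [contr_allL W A B true hEat]
        constructor
        · intro h d; exact (ih d).1.mp (key1 h d)
        · intro h; exact ⟨W.root, key2 (fun d => (ih d).1.mpr (h d)) W.root⟩
      · rw [contr_allL W A B false hEat]
        constructor
        · intro h d; exact (ih d).1.mp (key1 ⟨W.root, h W.root⟩ d)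
        · intro h; exact key2 fun d => (ih d).1.mpr (h d)
  | exG B ihB =>
      intro hsub
      have ih := fun d => ihB d (Subfm.trans (Subfm.exG (Subfm.refl (B d))) hsub)
      constructor
      · constructor
        · rintro ⟨k, d, hf⟩; exact ⟨d, (ih d).1.mp ⟨k, hf⟩⟩
        · rintro ⟨d, hf⟩
          obtain ⟨k, hk⟩ := (ih d).1.mpr hf
          exact ⟨k, d, hk⟩
      · rw [W.valid_iff_root]
        constructor
        · rintro ⟨d, hf⟩
          exact ⟨d, (ih d).2.mp ((W.valid_iff_root (B d)).mpr hf)⟩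
        · rintro ⟨d, hf⟩
          exact ⟨d, (W.valid_iff_root (B d)).mp ((ih d).2.mpr hf)⟩
  | exL B ihB =>
      intro hsub
      have ih := fun d => ihB d (Subfm.trans (Subfm.exL (Subfm.refl (B d))) hsub)
      constructor
      · rw [contr_exL_true W A B hEat]
        constructor
        · rintro ⟨k, d, hE, hf⟩; exact ⟨d, (ih d).1.mp ⟨k, hf⟩⟩
        · rintro ⟨d, hf⟩
          obtain ⟨k, hk⟩ := (ih d).1.mpr hf
          obtain ⟨k', hle, hE⟩ := hOP d k
          exact ⟨k', d, hE, W.force_mono (B d) hle hk⟩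
      · rw [W.valid_iff_root]
        constructor
        · rintro ⟨d, hE, hf⟩
          exact ⟨d, hE, (ih d).2.mp ((W.valid_iff_root (B d)).mpr hf)⟩
        · rintro ⟨d, hE, hf⟩
          exact ⟨d, hE, (W.valid_iff_root (B d)).mp ((ih d).2.mpr hf)⟩
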